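/- Let n and m be positive integers, A an n×n real matrix, B an n×m real matrix, and Q, R symmetric positive-definite matrices. Suppose the symmetric positive-definite matrix P solves the continuous-time algebraic Riccati equation Aᵀ P + P A − P B R⁻¹ Bᵀ P + Q = 0, set K = R⁻¹ Bᵀ P, and let M(τ) = exp(A τ) − (∫₀^τ exp(A s) ds)·B·K. Then for every x ∈ ℝⁿ with x ≠ 0 there exists τ* > 0 such that (M(τ)·x)ᵀ P (M(τ)·x) < xᵀ P x for all τ ∈ (0, τ*). -/

import Mathlib

/-!
Since `M(0) = 1` and `M'(0) = A - B K`, the function `τ ↦ V(M(τ) x)` has derivative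
`xᵀ ((A - B K)ᵀ P + P (A - B K)) x` at `0`. With `K = R⁻¹ Bᵀ P` the CARE turns this matrix into
the closed-loop Lyapunov form `-(Q + Kᵀ R K)`, which is negative definite, so `V(M(τ) x)` starts
out strictly below its initial value `V(x)`.
-/

open Matrix MeasureTheory

/-- The ZOH closed-loop transition matrix
`M(τ) = exp(A τ) − (∫₀^τ exp(A s) ds) · B · K`, with entrywise Bochner integral. -/
noncomputable def zohMatrix {n m : ℕ} (A : Matrix (Fin n) (Fin n) ℝ)
    (B : Matrix (Fin n) (Fin m) ℝ) (K : Matrix (Fin m) (Fin n) ℝ) (τ : ℝ) :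
    Matrix (Fin n) (Fin n) ℝ :=
  NormedSpace.exp (τ • A) -
    (Matrix.of fun i j => ∫ s in (0:ℝ)..τ, (NormedSpace.exp (s • A)) i j) * B * K

open Filter Topology

theorem HasDerivAt.eventually_lt_of_neg {f : ℝ → ℝ} {f' a : ℝ} (hf : HasDerivAt f f' a)
    (hf' : f' < 0) : ∀ᶠ t in 𝓝[>] a, f t < f a := by
  filter_upwards [(hf.tendsto_slope.mono_left (nhdsGT_le_nhdsNE a)).eventually_lt_const hf',
    self_mem_nhdsWithin] with t hslope hat
  exact (slope_neg_iff_of_le (le_of_lt hat)).1 hslope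

section Derivatives

variable {𝕜 ι κ : Type*} [NontriviallyNormedField 𝕜] [Fintype κ] {t : 𝕜}

theorem HasDerivAt.dotProduct {u v : 𝕜 → κ → 𝕜} {u' v' : κ → 𝕜} (hu : HasDerivAt u u' t)
    (hv : HasDerivAt v v' t) :
    HasDerivAt (fun τ => u τ ⬝ᵥ v τ) (u' ⬝ᵥ v t + u t ⬝ᵥ v') t := by
  have h := HasDerivAt.fun_sum (u := Finset.univ) fun i _ =>
    (hasDerivAt_pi.1 hu i).fun_mul (hasDerivAt_pi.1 hv i)
  rw [Finset.sum_add_distrib] at h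
  exact h

theorem hasDerivAt_mulVec_of_apply {M : 𝕜 → Matrix ι κ 𝕜} {M' : Matrix ι κ 𝕜}
    (hM : ∀ i j, HasDerivAt (fun τ => M τ i j) (M' i j) t) (x : κ → 𝕜) :
    HasDerivAt (fun τ => M τ *ᵥ x) (M' *ᵥ x) t :=
  hasDerivAt_pi.2 fun i => by
    simpa only [mulVec, dotProduct] using
      HasDerivAt.fun_sum (u := Finset.univ) fun j _ => (hM i j).mul_const (x j)

theorem HasDerivAt.const_mulVec {v : 𝕜 → κ → 𝕜} {v' : κ → 𝕜} (hv : HasDerivAt v v' t)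
    (P : Matrix ι κ 𝕜) : HasDerivAt (fun τ => P *ᵥ v τ) (P *ᵥ v') t :=
  hasDerivAt_pi.2 fun i =>
    HasDerivAt.fun_sum (u := Finset.univ) fun j _ => (hasDerivAt_pi.1 hv j).const_mul (P i j)

end Derivatives

section ZOH

variable {n m : ℕ} (A : Matrix (Fin n) (Fin n) ℝ)

theorem hasDerivAt_exp_smul_apply (t : ℝ) (i j : Fin n) :
    HasDerivAt (fun τ : ℝ => NormedSpace.exp (τ • A) i j)
      ((NormedSpace.exp (t • A) * A) i j) t := by
  -- Matrices carry no global norm; any normed-algebra structure yields the derivative of `exp`.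
  let _ : NormedRing (Matrix (Fin n) (Fin n) ℝ) := Matrix.linftyOpNormedRing
  let _ : NormedAlgebra ℝ (Matrix (Fin n) (Fin n) ℝ) := Matrix.linftyOpNormedAlgebra
  exact (entryLinearMap ℝ ℝ i j).toContinuousLinearMap.hasFDerivAt.comp_hasDerivAt t
    (hasDerivAt_exp_smul_const A t)

theorem continuous_exp_smul_apply (i j : Fin n) :
    Continuous fun s : ℝ => NormedSpace.exp (s • A) i j :=
  continuous_iff_continuousAt.2 fun t => (hasDerivAt_exp_smul_apply A t i j).continuousAt

variable (B : Matrix (Fin n) (Fin m) ℝ) (K : Matrix (Fin m) (Fin n) ℝ)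

theorem zohMatrix_zero : zohMatrix A B K 0 = 1 := by
  ext i j
  simp [zohMatrix, mul_apply]

theorem hasDerivAt_zohMatrix_mulVec_zero (x : Fin n → ℝ) :
    HasDerivAt (fun τ => zohMatrix A B K τ *ᵥ x) ((A - B * K) *ᵥ x) 0 := by
  have hexp : HasDerivAt (fun τ : ℝ => NormedSpace.exp (τ • A) *ᵥ x) (A *ᵥ x) 0 :=
    hasDerivAt_mulVec_of_apply (fun i j => by simpa using hasDerivAt_exp_smul_apply A 0 i j) x
  have hintegral : HasDerivAt
      (fun τ : ℝ => (of fun i j => ∫ s in (0:ℝ)..τ, NormedSpace.exp (s • A) i j) *ᵥ ((B * K) *ᵥ x))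
      ((B * K) *ᵥ x) 0 := by
    have h := hasDerivAt_mulVec_of_apply
      (M := fun τ : ℝ => of fun i j => ∫ s in (0:ℝ)..τ, NormedSpace.exp (s • A) i j) (M' := 1)
      (fun i j => by
        simpa using ((continuous_exp_smul_apply A i j).integral_hasStrictDerivAt 0 0).hasDerivAt)
      ((B * K) *ᵥ x)
    rwa [one_mulVec] at h
  have hzoh : (fun τ => zohMatrix A B K τ *ᵥ x) = fun τ =>
      NormedSpace.exp (τ • A) *ᵥ x -
        (of fun i j => ∫ s in (0:ℝ)..τ, NormedSpace.exp (s • A) i j) *ᵥ ((B * K) *ᵥ x) := by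
    ext τ : 1
    simp only [zohMatrix, sub_mulVec, mulVec_mulVec, Matrix.mul_assoc]
  rw [hzoh, sub_mulVec]
  exact hexp.sub hintegral

end ZOH

section Riccati

variable {α n m : Type*} [CommRing α] [Fintype n] [Fintype m] [DecidableEq m]

theorem dotProduct_mulVec_transpose_mul_add_mul (D P : Matrix n n α) (x : n → α) :
    x ⬝ᵥ (Dᵀ * P + P * D) *ᵥ x = D *ᵥ x ⬝ᵥ P *ᵥ x + x ⬝ᵥ P *ᵥ (D *ᵥ x) := by
  rw [add_mulVec, dotProduct_add, ← mulVec_mulVec, ← mulVec_mulVec, dotProduct_mulVec,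
    vecMul_transpose]

theorem closedLoop_lyapunov {A Q P : Matrix n n α} {B : Matrix n m α} {R : Matrix m m α}
    {K : Matrix m n α} (hP : P.IsSymm) (hR : R.IsSymm) (hRdet : IsUnit R.det)
    (hCARE : Aᵀ * P + P * A - P * B * R⁻¹ * Bᵀ * P + Q = 0) (hK : K = R⁻¹ * Bᵀ * P) :
    (A - B * K)ᵀ * P + P * (A - B * K) = -(Q + Kᵀ * R * K) := by
  have hKT : Kᵀ = P * B * R⁻¹ := by
    rw [hK, transpose_mul, transpose_mul, transpose_nonsing_inv, hR.eq, transpose_transpose,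
      hP.eq, Matrix.mul_assoc]
  have hKRK : Kᵀ * R * K = P * B * R⁻¹ * Bᵀ * P := by
    rw [hKT, hK]
    simp only [Matrix.mul_assoc, nonsing_inv_mul_cancel_left _ _ hRdet]
  have hQ : Q = P * B * R⁻¹ * Bᵀ * P - Aᵀ * P - P * A := by
    rw [← sub_eq_zero, ← hCARE]
    abel
  rw [hKRK, transpose_sub, transpose_mul, hKT, hQ, hK]
  simp only [Matrix.sub_mul, Matrix.mul_sub, Matrix.mul_assoc]
  abel

end Riccati

theorem exists_admissible_interval_general
    (n m : ℕ)
    (A : Matrix (Fin n) (Fin n) ℝ) (B : Matrix (Fin n) (Fin m) ℝ)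
    (Q P : Matrix (Fin n) (Fin n) ℝ) (R : Matrix (Fin m) (Fin m) ℝ)
    (hQ : Q.PosDef) (hR : R.PosDef) (hP : P.PosDef)
    (hCARE : Aᵀ * P + P * A - P * B * R⁻¹ * Bᵀ * P + Q = 0)
    (K : Matrix (Fin m) (Fin n) ℝ) (hK : K = R⁻¹ * Bᵀ * P) :
    ∀ x : Fin n → ℝ, x ≠ 0 → ∃ τstar : ℝ, 0 < τstar ∧
      ∀ τ : ℝ, 0 < τ → τ < τstar →
        (zohMatrix A B K τ *ᵥ x) ⬝ᵥ P *ᵥ (zohMatrix A B K τ *ᵥ x) < x ⬝ᵥ P *ᵥ x := by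
  intro x hx
  have hV := (hasDerivAt_zohMatrix_mulVec_zero A B K x).dotProduct
    ((hasDerivAt_zohMatrix_mulVec_zero A B K x).const_mulVec P)
  rw [zohMatrix_zero, one_mulVec, ← dotProduct_mulVec_transpose_mul_add_mul] at hV
  have hneg : x ⬝ᵥ ((A - B * K)ᵀ * P + P * (A - B * K)) *ᵥ x < 0 := by
    rw [closedLoop_lyapunov (isHermitian_iff_isSymm.1 hP.isHermitian)
        (isHermitian_iff_isSymm.1 hR.isHermitian) ((isUnit_iff_isUnit_det R).1 hR.isUnit) hCARE hK,
      neg_mulVec, dotProduct_neg, neg_lt_zero, ← conjTranspose_eq_transpose_of_trivial]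
    exact (hQ.add_posSemidef (hR.posSemidef.conjTranspose_mul_mul_same K)).dotProduct_mulVec_pos hx
  obtain ⟨τstar, hτstar, hdecr⟩ := mem_nhdsGT_iff_exists_Ioo_subset.1 (hV.eventually_lt_of_neg hneg)
  refine ⟨τstar, hτstar, fun τ hτ hτstar => ?_⟩
  simpa only [Set.mem_ofPred_eq, zohMatrix_zero, one_mulVec] using hdecr ⟨hτ, hτstar⟩

/-- Under the CARE with `K = R⁻¹ Bᵀ P`, for every `x ≠ 0` there exists
`τ* > 0` such that `(M(τ)x)ᵀ P (M(τ)x) < xᵀ P x` for all `τ ∈ (0, τ*)`. -/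
theorem exists_admissible_interval
    (n m : ℕ) (hn : 0 < n) (hm : 0 < m)
    (A : Matrix (Fin n) (Fin n) ℝ) (B : Matrix (Fin n) (Fin m) ℝ)
    (Q P : Matrix (Fin n) (Fin n) ℝ) (R : Matrix (Fin m) (Fin m) ℝ)
    (hQ : Q.PosDef) (hR : R.PosDef) (hP : P.PosDef)
    (hCARE : Aᵀ * P + P * A - P * B * R⁻¹ * Bᵀ * P + Q = 0)
    (K : Matrix (Fin m) (Fin n) ℝ) (hK : K = R⁻¹ * Bᵀ * P) :
    ∀ x : Fin n → ℝ, x ≠ 0 → ∃ τstar : ℝ, 0 < τstar ∧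
      ∀ τ : ℝ, 0 < τ → τ < τstar →
        (zohMatrix A B K τ *ᵥ x) ⬝ᵥ P *ᵥ (zohMatrix A B K τ *ᵥ x) < x ⬝ᵥ P *ᵥ x :=
  exists_admissible_interval_general n m A B Q P R hQ hR hP hCARE K hK
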